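/- arXiv:math/0008178 — 3 statements merged into one kernel-verified Lean document; each statement's English description precedes it below -/
import Mathlib

section
/- Let G be a topological group acting continuously on a Hausdorff topological space M, let x ∈ M with stabilizer H := G_x, and let Σ ∋ x be a topological slice at x: an H-invariant subset such that G·Σ is open in M and the natural map (G × Σ)/H → G·Σ, [g,s] ↦ g·s, is a homeomorphism. Then: (i) for every m ∈ Σ, the G-stabilizer G_m is contained in H, so G_m = H_m; and (ii) for every H-invariant subset Z ⊆ Σ, the map Z/H → (G·Z)/G induced by the inclusion Z ↪ G·Z is a homeomorphism, which for every subgroup L of G carries the image of Z ∩ M_{(L)} in Z/H onto the image of (G·Z) ∩ M_{(L)} in (G·Z)/G (so it is an isomorphism of spaces partitioned by orbit types). -/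
section Slice

variable (G M : Type) [Group G] [TopologicalSpace G] [IsTopologicalGroup G]
  [TopologicalSpace M] [T2Space M] [MulAction G M] [ContinuousSMul G M]

/-- The saturation `G · Z` of a subset `Z ⊆ M`. -/
def satur (Z : Set M) : Set M := {m | ∃ g : G, ∃ z ∈ Z, g • z = m}

/-- The relation on `G × Σ` whose classes are the orbits of the `H`-action
`h • (g, s) = (g h⁻¹, h • s)`, where `H = G_x` is the stabilizer of `x`. -/
def sliceRel (x : M) (Sl : Set M) (p q : G × ↥Sl) : Prop :=
  ∃ h : ↥(MulAction.stabilizer G x),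
    q.1 = p.1 * (h : G)⁻¹ ∧ (q.2 : M) = (h : G) • (p.2 : M)

/-- The orbit relation for the `H = G_x`-action on an `H`-invariant subset `Z`. -/
def hOrbRel (x : M) (Z : Set M) (a b : ↥Z) : Prop :=
  ∃ h : ↥(MulAction.stabilizer G x), (h : G) • a.1 = b.1

/-- The orbit relation for the `G`-action on a `G`-invariant subset `A`. -/
def gOrbRel (A : Set M) (a b : ↥A) : Prop := ∃ g : G, g • a.1 = b.1

/-- The set `M_{(L)}` of points of `M` of orbit type `(L)`: those whose `G`-stabilizer
is conjugate to `L` in `G`. -/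
def orbitTypeSet (L : Subgroup G) : Set M :=
  {m | ∃ g : G, ∀ k : G, k ∈ MulAction.stabilizer G m ↔ g⁻¹ * k * g ∈ L}

end Slice

/-! The slice property forces every `g` with `g • s ∈ Σ` for some `s ∈ Σ` into `H = G_x`:
`g • s = 1 • s'` means `[g, s] = [1, s']` in `(G × Σ)/H`. Hence `Z/H → (G·Z)/G` is injective
(and obviously a continuous surjection). Its inverse is continuous because `(g, z) ↦ g • z`
is open onto `G·Z`: it is the restriction of the open map `G × Σ → (G × Σ)/H ≅ G·Σ ⊆ M` to
`G × Z`, which is the full preimage of `G·Z` since `Z` is `H`-invariant. Orbit types are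
`G`-invariant, so they are matched by the homeomorphism. -/

open Function Set MulAction Topology

theorem isOpenMap_quot_mk_of_exists_continuous {X ι : Type*} [TopologicalSpace X]
    {r : X → X → Prop} (hr : Equivalence r) (T : ι → X → X) (hT : ∀ i, Continuous (T i))
    (hrT : ∀ a b, r a b ↔ ∃ i, T i b = a) : IsOpenMap (Quot.mk r) := by
  intro U hU
  rw [← isQuotientMap_quot_mk.isOpen_preimage]
  have hsat : Quot.mk r ⁻¹' (Quot.mk r '' U) = ⋃ i, T i ⁻¹' U := by
    ext b
    simp only [mem_preimage, mem_image, mem_iUnion, hr.quot_mk_eq_iff, hrT]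
    constructor
    · rintro ⟨a, ha, i, rfl⟩
      exact ⟨i, ha⟩
    · rintro ⟨i, hi⟩
      exact ⟨T i b, hi, i, rfl⟩
  rw [hsat]
  exact isOpen_iUnion fun i => hU.preimage (hT i)

theorem IsOpenMap.of_isInducing_of_range_eq_preimage {X X' Y : Type*} [TopologicalSpace X]
    [TopologicalSpace X'] [TopologicalSpace Y] {Φ : X → Y} (hΦ : IsOpenMap Φ) {ι : X' → X}
    (hι : IsInducing ι) {S : Set Y} (hS : range ι = Φ ⁻¹' S) {π : X' → S}
    (hπ : ∀ a, (π a : Y) = Φ (ι a)) : IsOpenMap π := by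
  intro U hU
  obtain ⟨V, hV, rfl⟩ := hι.isOpen_iff.mp hU
  have himage : π '' (ι ⁻¹' V) = Subtype.val ⁻¹' (Φ '' V) := by
    ext y
    constructor
    · rintro ⟨a, ha, rfl⟩
      exact ⟨ι a, ha, (hπ a).symm⟩
    · rintro ⟨b, hb, hby⟩
      have hbS : b ∈ Φ ⁻¹' S := by rw [mem_preimage, hby]; exact y.2
      obtain ⟨a, rfl⟩ : b ∈ range ι := hS ▸ hbS
      exact ⟨a, hb, Subtype.ext ((hπ a).trans hby)⟩
  rw [himage]
  exact (hΦ V hV).preimage continuous_subtype_val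

section Algebra

variable {G M : Type} [Group G] [MulAction G M]

theorem mem_stabilizer_smul_iff (g k : G) (m : M) :
    k ∈ stabilizer G (g • m) ↔ g⁻¹ * k * g ∈ stabilizer G m := by
  simp only [mem_stabilizer_iff, mul_smul, inv_smul_eq_iff]

theorem smul_mem_orbitTypeSet {L : Subgroup G} {m : M} (g : G)
    (hm : m ∈ orbitTypeSet G M L) : g • m ∈ orbitTypeSet G M L := by
  obtain ⟨g₀, hg₀⟩ := hm
  refine ⟨g * g₀, fun k => ?_⟩
  rw [mem_stabilizer_smul_iff, hg₀]
  simp only [mul_inv_rev, mul_assoc]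

theorem gOrbRel_equivalence (A : Set M) : Equivalence (gOrbRel G M A) where
  refl a := ⟨1, one_smul G _⟩
  symm := fun ⟨g, hg⟩ => ⟨g⁻¹, by rw [← hg, inv_smul_smul]⟩
  trans := fun ⟨g, hg⟩ ⟨g', hg'⟩ => ⟨g' * g, by rw [mul_smul, hg, hg']⟩

theorem sliceRel_equivalence (x : M) (Sl : Set M) : Equivalence (sliceRel G M x Sl) where
  refl p := ⟨1, by simp, by simp⟩
  symm := fun ⟨h, h1, h2⟩ => ⟨h⁻¹, by simp [h1, mul_assoc], by simp [h2]⟩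
  trans := fun ⟨h, h1, h2⟩ ⟨h', h1', h2'⟩ =>
    ⟨h' * h, by simp [h1', h1, mul_assoc], by simp [h2', h2, smul_smul]⟩

variable (G) in
/-- Every `g` carrying some point of `S` into `S` fixes `x`. -/
def TransporterLeStabilizer (x : M) (S : Set M) : Prop :=
  ∀ g : G, ∀ s ∈ S, ∀ s' ∈ S, g • s = s' → g ∈ stabilizer G x

theorem TransporterLeStabilizer.mono {x : M} {S T : Set M} (hT : TransporterLeStabilizer G x T)
    (hST : S ⊆ T) : TransporterLeStabilizer G x S :=
  fun g s hs s' hs' => hT g s (hST hs) s' (hST hs')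

theorem TransporterLeStabilizer.stabilizer_le {x : M} {S : Set M}
    (hS : TransporterLeStabilizer G x S) {m : M} (hm : m ∈ S) :
    stabilizer G m ≤ stabilizer G x :=
  fun g hg => hS g m hm m hm hg

theorem subset_satur (Z : Set M) : Z ⊆ satur G M Z :=
  fun z hz => ⟨1, z, hz, one_smul G z⟩

def smulSatur (Z : Set M) (p : G × Z) : satur G M Z :=
  ⟨p.1 • (p.2 : M), p.1, p.2, p.2.2, rfl⟩

theorem smulSatur_surjective (Z : Set M) : Surjective (smulSatur (G := G) Z) := by
  rintro ⟨m, g, z, hz, rfl⟩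
  exact ⟨(g, ⟨z, hz⟩), rfl⟩

def saturQuotMap (x : M) (Z : Set M) :
    Quot (hOrbRel G M x Z) → Quot (gOrbRel G M (satur G M Z)) :=
  Quot.lift (fun z => Quot.mk _ (inclusion (subset_satur Z) z))
    fun _ _ ⟨h, hh⟩ => Quot.sound ⟨h, hh⟩

variable {x : M} {Z : Set M}

theorem saturQuotMap_mk_snd (p : G × Z) :
    saturQuotMap (G := G) x Z (Quot.mk _ p.2) = Quot.mk _ (smulSatur Z p) :=
  Quot.sound ⟨p.1, rfl⟩

theorem saturQuotMap_surjective : Surjective (saturQuotMap (G := G) x Z) := by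
  refine Quot.ind fun m => ?_
  obtain ⟨p, rfl⟩ := smulSatur_surjective Z m
  exact ⟨Quot.mk _ p.2, saturQuotMap_mk_snd p⟩

theorem saturQuotMap_injective
    (hZ : TransporterLeStabilizer G x Z) :
    Injective (saturQuotMap (G := G) x Z) := by
  refine Quot.ind fun a => Quot.ind fun b hab => ?_
  obtain ⟨g, hg⟩ := ((gOrbRel_equivalence _).quot_mk_eq_iff _ _).mp hab
  exact Quot.sound ⟨⟨g, hZ g a a.2 b b.2 hg⟩, hg⟩

theorem saturQuotMap_image_mk {P : Set M} (hP : ∀ g : G, ∀ m ∈ P, g • m ∈ P) :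
    saturQuotMap (G := G) x Z '' (Quot.mk _ '' {z : Z | z.1 ∈ P}) =
      Quot.mk _ '' {m : satur G M Z | m.1 ∈ P} := by
  rw [image_image]
  apply Subset.antisymm
  · rintro _ ⟨z, hz, rfl⟩
    exact ⟨_, hz, rfl⟩
  · rintro _ ⟨m, hm, rfl⟩
    obtain ⟨p, rfl⟩ := smulSatur_surjective Z m
    have hp : (p.2 : M) ∈ P := by simpa [smulSatur] using hP p.1⁻¹ _ hm
    exact ⟨p.2, hp, saturQuotMap_mk_snd p⟩

noncomputable def saturQuotEquiv
    (hZ : TransporterLeStabilizer G x Z) :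
    Quot (hOrbRel G M x Z) ≃ Quot (gOrbRel G M (satur G M Z)) :=
  Equiv.ofBijective _ ⟨saturQuotMap_injective hZ, saturQuotMap_surjective⟩

theorem transporterLeStabilizer_of_injective {Sl : Set M} {F : Quot (sliceRel G M x Sl) → M}
    (hF : Injective F) (hFmk : ∀ p, F (Quot.mk _ p) = p.1 • (p.2 : M)) :
    TransporterLeStabilizer G x Sl := by
  intro g s hs s' hs' hgs
  have hmk : Quot.mk (sliceRel G M x Sl) (g, ⟨s, hs⟩) = Quot.mk _ (1, ⟨s', hs'⟩) :=
    hF (by rw [hFmk, hFmk, one_smul, hgs])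
  obtain ⟨h, h1, -⟩ := ((sliceRel_equivalence x Sl).quot_mk_eq_iff _ _).mp hmk
  have hg : g = h := mul_inv_eq_one.mp h1.symm
  exact hg ▸ h.2

theorem mem_of_smul_mem_satur {Sl : Set M}
    (hstab : TransporterLeStabilizer G x Sl)
    (hZS : Z ⊆ Sl) (hZinv : ∀ h ∈ stabilizer G x, ∀ z ∈ Z, h • z ∈ Z) {g : G} {s : M}
    (hs : s ∈ Sl) (hgs : g • s ∈ satur G M Z) : s ∈ Z := by
  obtain ⟨g', z, hz, hgz⟩ := hgs
  have hzs : (g⁻¹ * g') • z = s := by rw [mul_smul, hgz, inv_smul_smul]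
  exact hzs ▸ hZinv _ (hstab _ z (hZS hz) s hs hzs) z hz

end Algebra

section Topology

variable {G M : Type} [Group G] [MulAction G M] [TopologicalSpace M] {x : M} {Z : Set M}

theorem continuous_saturQuotMap : Continuous (saturQuotMap (G := G) x Z) :=
  continuous_quot_lift _ (continuous_quot_mk.comp (continuous_inclusion _))

variable [TopologicalSpace G] {Sl : Set M}

theorem isOpenMap_smulSatur (hΦ : IsOpenMap fun p : G × Sl => p.1 • (p.2 : M))
    (hstab : TransporterLeStabilizer G x Sl)
    (hZS : Z ⊆ Sl) (hZinv : ∀ h ∈ stabilizer G x, ∀ z ∈ Z, h • z ∈ Z) :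
    IsOpenMap (smulSatur (G := G) Z) := by
  refine hΦ.of_isInducing_of_range_eq_preimage
    (IsInducing.id.prodMap (IsEmbedding.inclusion hZS).isInducing) ?_ fun _ => rfl
  ext p
  constructor
  · rintro ⟨⟨g, z⟩, rfl⟩
    exact ⟨g, z, z.2, rfl⟩
  · intro hp
    exact ⟨(p.1, ⟨p.2, mem_of_smul_mem_satur hstab hZS hZinv p.2.2 hp⟩), rfl⟩

variable [ContinuousSMul G M]

theorem continuous_smulSatur : Continuous (smulSatur (G := G) Z) :=
  (continuous_fst.smul (continuous_subtype_val.comp continuous_snd)).subtype_mk _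

noncomputable def saturQuotHomeomorph
    (hZ : TransporterLeStabilizer G x Z)
    (hopen : IsOpenMap (smulSatur (G := G) Z)) :
    Quot (hOrbRel G M x Z) ≃ₜ Quot (gOrbRel G M (satur G M Z)) where
  toEquiv := saturQuotEquiv hZ
  continuous_toFun := continuous_saturQuotMap
  continuous_invFun := by
    show Continuous (saturQuotEquiv hZ).symm
    have hq : IsQuotientMap (Quot.mk (gOrbRel G M (satur G M Z)) ∘ smulSatur Z) :=
      isQuotientMap_quot_mk.comp
        (hopen.isQuotientMap continuous_smulSatur (smulSatur_surjective Z))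
    refine hq.continuous_iff.mpr ?_
    have hcomp : (saturQuotEquiv hZ).symm ∘ (Quot.mk _ ∘ smulSatur Z) =
        Quot.mk (hOrbRel G M x Z) ∘ Prod.snd := by
      funext p
      exact (Equiv.symm_apply_eq _).mpr (saturQuotMap_mk_snd (x := x) p).symm
    rw [hcomp]
    exact continuous_quot_mk.comp continuous_snd

variable [ContinuousMul G]

theorem isOpenMap_quot_mk_sliceRel (hinv : ∀ h ∈ stabilizer G x, ∀ s ∈ Sl, h • s ∈ Sl) :
    IsOpenMap (Quot.mk (sliceRel G M x Sl)) := by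
  refine isOpenMap_quot_mk_of_exists_continuous (sliceRel_equivalence x Sl)
    (fun (h : stabilizer G x) p =>
      (p.1 * h, ⟨(h : G)⁻¹ • (p.2 : M), hinv _ (inv_mem h.2) _ p.2.2⟩))
    (fun _ => (continuous_fst.mul continuous_const).prodMk <| Continuous.subtype_mk
      ((continuous_const_smul _).comp (continuous_subtype_val.comp continuous_snd)) _)
    fun p q => ?_
  constructor
  · rintro ⟨h, h1, h2⟩
    exact ⟨h, Prod.ext (by simp [h1]) (Subtype.ext (by simp [h2]))⟩
  · rintro ⟨h, rfl⟩
    exact ⟨h, by simp, by simp⟩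

theorem isOpenMap_smul_of_isOpenMap_slice {F : Quot (sliceRel G M x Sl) → M}
    (hF : IsOpenMap F) (hFmk : ∀ p, F (Quot.mk _ p) = p.1 • (p.2 : M))
    (hinv : ∀ h ∈ stabilizer G x, ∀ s ∈ Sl, h • s ∈ Sl) :
    IsOpenMap fun p : G × Sl => p.1 • (p.2 : M) := by
  simpa only [comp_def, hFmk] using hF.comp (isOpenMap_quot_mk_sliceRel hinv)

end Topology

theorem slice_quotient_theorem_general
    (G M : Type) [Group G] [TopologicalSpace G] [IsTopologicalGroup G]
    [TopologicalSpace M] [MulAction G M] [ContinuousSMul G M]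
    (x : M) (Sl : Set M)
    (hinv : ∀ h ∈ MulAction.stabilizer G x, ∀ s ∈ Sl, h • s ∈ Sl)
    (hopen : IsOpen (satur G M Sl))
    (hslice : ∃ f : Quot (sliceRel G M x Sl) ≃ₜ ↥(satur G M Sl),
      ∀ p : G × ↥Sl, (f (Quot.mk _ p) : M) = p.1 • (p.2 : M)) :
    -- (i) stabilizers of points of the slice are contained in `H = G_x`
    (∀ m ∈ Sl, MulAction.stabilizer G m ≤ MulAction.stabilizer G x) ∧
    -- (ii) for every `H`-invariant `Z ⊆ Σ`, `Z/H ≅ (G·Z)/G` as partitioned spaces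
    (∀ Z : Set M, Z ⊆ Sl →
      (∀ h ∈ MulAction.stabilizer G x, ∀ z ∈ Z, h • z ∈ Z) →
      ∃ φ : Quot (hOrbRel G M x Z) ≃ₜ Quot (gOrbRel G M (satur G M Z)),
        (∀ (z : ↥Z) (m : ↥(satur G M Z)), (m : M) = (z : M) →
          φ (Quot.mk _ z) = Quot.mk _ m) ∧
        ∀ L : Subgroup G,
          φ '' (Quot.mk (hOrbRel G M x Z) ''
              {z : ↥Z | z.1 ∈ orbitTypeSet G M L}) =
            Quot.mk (gOrbRel G M (satur G M Z)) ''
              {m : ↥(satur G M Z) | m.1 ∈ orbitTypeSet G M L}) := by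
  obtain ⟨f, hf⟩ := hslice
  have hstab : TransporterLeStabilizer G x Sl :=
    transporterLeStabilizer_of_injective (Subtype.val_injective.comp f.injective) hf
  refine ⟨fun m hm => hstab.stabilizer_le hm, fun Z hZS hZinv => ?_⟩
  have hΦ := isOpenMap_smul_of_isOpenMap_slice (hopen.isOpenMap_subtype_val.comp f.isOpenMap)
    hf hinv
  refine ⟨saturQuotHomeomorph (hstab.mono hZS) (isOpenMap_smulSatur hΦ hstab hZS hZinv),
    fun z m hm => congrArg (Quot.mk _) (Subtype.ext hm.symm), fun L => ?_⟩
  exact saturQuotMap_image_mk fun g _ hm => smul_mem_orbitTypeSet g hm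

/-- Let `G` be a topological group acting continuously on a Hausdorff
space `M`, let `x ∈ M` with stabilizer `H = G_x`, and let `Σ ∋ x` be a topological
slice at `x`: an `H`-invariant subset such that `G·Σ` is open in `M` and the natural
map `(G × Σ)/H → G·Σ`, `[g,s] ↦ g·s`, is a homeomorphism.  Then:
(i) for every `m ∈ Σ` the `G`-stabilizer `G_m` is contained in `H` (so `G_m = H_m`);
(ii) for every `H`-invariant subset `Z ⊆ Σ`, the map `Z/H → (G·Z)/G` induced by the
inclusion `Z ↪ G·Z` is a homeomorphism which, for every subgroup `L ≤ G`, carries the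
image of `Z ∩ M_{(L)}` in `Z/H` onto the image of `(G·Z) ∩ M_{(L)}` in `(G·Z)/G` (so it
is an isomorphism of spaces partitioned by orbit types). -/
theorem slice_quotient_theorem
    (G M : Type) [Group G] [TopologicalSpace G] [IsTopologicalGroup G]
    [TopologicalSpace M] [T2Space M] [MulAction G M] [ContinuousSMul G M]
    (x : M) (Sl : Set M) (hx : x ∈ Sl)
    (hinv : ∀ h ∈ MulAction.stabilizer G x, ∀ s ∈ Sl, h • s ∈ Sl)
    (hopen : IsOpen (satur G M Sl))
    (hslice : ∃ f : Quot (sliceRel G M x Sl) ≃ₜ ↥(satur G M Sl),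
      ∀ p : G × ↥Sl, (f (Quot.mk _ p) : M) = p.1 • (p.2 : M)) :
    -- (i) stabilizers of points of the slice are contained in `H = G_x`
    (∀ m ∈ Sl, MulAction.stabilizer G m ≤ MulAction.stabilizer G x) ∧
    -- (ii) for every `H`-invariant `Z ⊆ Σ`, `Z/H ≅ (G·Z)/G` as partitioned spaces
    (∀ Z : Set M, Z ⊆ Sl →
      (∀ h ∈ MulAction.stabilizer G x, ∀ z ∈ Z, h • z ∈ Z) →
      ∃ φ : Quot (hOrbRel G M x Z) ≃ₜ Quot (gOrbRel G M (satur G M Z)),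
        (∀ (z : ↥Z) (m : ↥(satur G M Z)), (m : M) = (z : M) →
          φ (Quot.mk _ z) = Quot.mk _ m) ∧
        ∀ L : Subgroup G,
          φ '' (Quot.mk (hOrbRel G M x Z) ''
              {z : ↥Z | z.1 ∈ orbitTypeSet G M L}) =
            Quot.mk (gOrbRel G M (satur G M Z)) ''
              {m : ↥(satur G M Z) | m.1 ∈ orbitTypeSet G M L}) :=
  slice_quotient_theorem_general G M x Sl hinv hopen hslice
end

section
/- Let G be a topological group, H a compact subgroup of G, and let G act continuously and linearly on a finite-dimensional real vector space E with an H-invariant direct sum decomposition E = A ⊕ B. Let W be a topological space with a continuous H-action and Φ : W → B a continuous H-equivariant map. Form the associated space Y := (G × (A × W))/H, where H acts by h·(g, a, w) = (g h^{-1}, h·a, h·w) and G acts by left multiplication on the first factor, and define F : Y → E by F([g, a, w]) = g·(a + Φ(w)). Then F is well defined and G-equivariant, F^{-1}(0) = {[g, 0, w] : g ∈ G, w ∈ W, Φ(w) = 0}, the map w ↦ [1, 0, w] induces a homeomorphism Φ^{-1}(0)/H → F^{-1}(0)/G, and for every w ∈ Φ^{-1}(0) the G-stabilizer of [1, 0,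 w] equals the H-stabilizer of w (so the homeomorphism matches orbit-type pieces). -/
section AssocBundle

variable (G : Type) [Group G] [TopologicalSpace G] [IsTopologicalGroup G]
  (H : Subgroup G)
  (E : Type) [NormedAddCommGroup E] [NormedSpace ℝ E] [FiniteDimensional ℝ E]
  [DistribMulAction G E] [SMulCommClass G ℝ E] [ContinuousSMul G E]
  (A : Submodule ℝ E)
  (W : Type) [TopologicalSpace W] [MulAction ↥H W] [ContinuousSMul ↥H W]
  (Φ : W → E)

/-- The relation on `G × (A × W)` whose classes are the orbits of the `H`-action
`h • (g, a, w) = (g h⁻¹, h • a, h • w)`; its quotient is the associated space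
`Y = (G × (A × W))/H`. -/
def assocRel (p q : G × (↥A × W)) : Prop :=
  ∃ h : ↥H, q.1 = p.1 * (h : G)⁻¹ ∧
    (q.2.1 : E) = (h : G) • (p.2.1 : E) ∧ q.2.2 = h • p.2.2

/-- The associated space `Y = (G × (A × W))/H`, with the quotient topology. -/
def AssocY : Type := Quot (assocRel G H E A W)

instance : TopologicalSpace (AssocY G H E A W) :=
  inferInstanceAs (TopologicalSpace (Quot _))

/-- The map `G × (A × W) → E`, `(g, a, w) ↦ g • (a + Φ(w))`, inducing
`F : Y → E`, `F([g, a, w]) = g • (a + Φ(w))`. -/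
def Ftil (p : G × (↥A × W)) : E := p.1 • ((p.2.1 : E) + Φ p.2.2)

/-- The zero fiber `F⁻¹(0) ⊆ Y`. -/
def FZero : Set (AssocY G H E A W) :=
  {y | ∀ p : G × (↥A × W), y = Quot.mk (assocRel G H E A W) p → Ftil G E A W Φ p = 0}

/-- The orbit relation of the `G`-action `g • [a, η, w] = [g a, η, w]` on the zero
fiber `F⁻¹(0) ⊆ Y`. -/
def fzRel (a b : ↥(FZero G H E A W Φ)) : Prop :=
  ∃ g : G, ∃ p : G × (↥A × W),
    a.1 = Quot.mk (assocRel G H E A W) p ∧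
    b.1 = Quot.mk (assocRel G H E A W) (g * p.1, p.2)

/-- The zero level set `Φ⁻¹(0) ⊆ W`. -/
def PhiZero : Set W := {w | Φ w = 0}

/-- The orbit relation of the `H`-action on `Φ⁻¹(0)`. -/
def phizRel (a b : ↥(PhiZero E W Φ)) : Prop := ∃ h : ↥H, h • a.1 = b.1

end AssocBundle

/-!
By `IsCompl A B`, `F [g, a, w] = g • (a + Φ w)` vanishes exactly when `a = 0` and `Φ w = 0`, and
every such class is `G`-equivalent to `[1, 0, w]`; so `w ↦ [1, 0, w]` is a continuous bijection
`Φ⁻¹(0)/H → F⁻¹(0)/G`. It is a homeomorphism because its composite with the continuous projection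
`F⁻¹(0)/G → W/H`, `[g, a, w] ↦ H • w`, is the map `Φ⁻¹(0)/H → W/H`, which is an embedding:
`W → W/H` is an open quotient map and `Φ⁻¹(0)` is `H`-invariant.
-/

open Topology MulAction

section Algebra

variable {G : Type} [Group G] {H : Subgroup G}
  {E : Type} [NormedAddCommGroup E] [DistribMulAction G E] {W : Type} [MulAction ↥H W] {Φ : W → E}

theorem smul_mem_PhiZero (hΦeq : ∀ (h : ↥H) (w : W), Φ (h • w) = (h : G) • Φ w) (h : ↥H)
    {w : W} (hw : w ∈ PhiZero E W Φ) : h • w ∈ PhiZero E W Φ := by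
  change Φ (h • w) = 0
  rw [hΦeq, show Φ w = 0 from hw, smul_zero]

def phizQuotToOrbits : Quot (phizRel G H E W Φ) → orbitRel.Quotient (↥H) W :=
  Quot.lift (fun w => Quotient.mk _ w.1) <| by
    rintro w w' ⟨h, hw⟩
    exact Quotient.sound ⟨h⁻¹, by simp [← hw]⟩

variable [NormedSpace ℝ E] {A : Submodule ℝ E}

theorem assocRel_equivalence : Equivalence (assocRel G H E A W) where
  refl _ := ⟨1, by simp, by simp, by simp⟩
  symm := by
    rintro p q ⟨h, hg, ha, hw⟩
    exact ⟨h⁻¹, by simp [hg], by simp [ha], by simp [hw]⟩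
  trans := by
    rintro p q r ⟨h, hg, ha, hw⟩ ⟨h', hg', ha', hw'⟩
    exact ⟨h' * h, by simp [hg', hg, mul_assoc], by simp [ha', ha, mul_smul],
      by simp [hw', hw, mul_smul]⟩

theorem quot_mk_assocRel_eq_iff {p q : G × (↥A × W)} :
    Quot.mk (assocRel G H E A W) p = Quot.mk _ q ↔ assocRel G H E A W p q :=
  Quot.eq.trans assocRel_equivalence.eqvGen_iff

theorem Ftil_eq_of_assocRel (hΦeq : ∀ (h : ↥H) (w : W), Φ (h • w) = (h : G) • Φ w)
    {p q : G × (↥A × W)} (hpq : assocRel G H E A W p q) :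
    Ftil G E A W Φ p = Ftil G E A W Φ q := by
  obtain ⟨h, hg, ha, hw⟩ := hpq
  rw [Ftil, Ftil, hg, ha, hw, hΦeq, ← smul_add, smul_smul, inv_mul_cancel_right]

theorem Ftil_mul_left (g : G) (p : G × (↥A × W)) :
    Ftil G E A W Φ (g * p.1, p.2) = g • Ftil G E A W Φ p :=
  mul_smul _ _ _

theorem Ftil_eq_zero_iff {B : Submodule ℝ E} (hcompl : IsCompl A B) (hΦB : ∀ w : W, Φ w ∈ B)
    (p : G × (↥A × W)) :
    Ftil G E A W Φ p = 0 ↔ (p.2.1 : E) = 0 ∧ Φ p.2.2 = 0 := by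
  rw [Ftil, smul_eq_zero_iff_eq]
  refine ⟨fun h => ?_, fun ⟨ha, hw⟩ => by rw [ha, hw, add_zero]⟩
  have ha : (p.2.1 : E) = -Φ p.2.2 := eq_neg_of_add_eq_zero_left h
  have ha0 : (p.2.1 : E) = 0 :=
    Submodule.disjoint_def.mp hcompl.disjoint _ p.2.1.2 (ha ▸ neg_mem (hΦB _))
  exact ⟨ha0, by rwa [ha0, zero_add] at h⟩

theorem quot_mk_mem_FZero_iff (hΦeq : ∀ (h : ↥H) (w : W), Φ (h • w) = (h : G) • Φ w)
    {p : G × (↥A × W)} :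
    Quot.mk (assocRel G H E A W) p ∈ FZero G H E A W Φ ↔ Ftil G E A W Φ p = 0 :=
  ⟨fun hp => hp p rfl, fun hp _ hq =>
    Ftil_eq_of_assocRel hΦeq (quot_mk_assocRel_eq_iff.mp hq) ▸ hp⟩

theorem quot_mk_zero_eq_quot_mk_one_zero_iff (w : W) (g : G) :
    Quot.mk (assocRel G H E A W) (g, ((0 : ↥A), w)) = Quot.mk _ (1, ((0 : ↥A), w)) ↔
      ∃ h : ↥H, (h : G) = g ∧ h • w = w := by
  rw [quot_mk_assocRel_eq_iff]
  constructor
  · rintro ⟨h, hg, -, hw⟩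
    exact ⟨h, (mul_inv_eq_one.mp hg.symm).symm, hw.symm⟩
  · rintro ⟨h, rfl, hw⟩
    exact ⟨h, (mul_inv_cancel _).symm, by simp, hw.symm⟩

def FZero.ofPhiZero (hΦeq : ∀ (h : ↥H) (w : W), Φ (h • w) = (h : G) • Φ w)
    (w : ↥(PhiZero E W Φ)) : ↥(FZero G H E A W Φ) :=
  ⟨Quot.mk _ (1, ((0 : ↥A), w.1)), (quot_mk_mem_FZero_iff hΦeq).mpr <| by
    rw [Ftil, show Φ w.1 = 0 from w.2]; simp⟩

def phizQuotToFzQuot (hΦeq : ∀ (h : ↥H) (w : W), Φ (h • w) = (h : G) • Φ w) :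
    Quot (phizRel G H E W Φ) → Quot (fzRel G H E A W Φ) :=
  Quot.lift (fun w => Quot.mk _ (FZero.ofPhiZero hΦeq w)) <| by
    rintro w w' ⟨h, hw⟩
    refine Quot.sound ⟨h, (1, ((0 : ↥A), w.1)), rfl, ?_⟩
    exact (quot_mk_assocRel_eq_iff.mpr ⟨h, by simp, by simp, hw.symm⟩).symm

theorem phizQuotToFzQuot_surjective {B : Submodule ℝ E} (hcompl : IsCompl A B)
    (hΦB : ∀ w : W, Φ w ∈ B) (hΦeq : ∀ (h : ↥H) (w : W), Φ (h • w) = (h : G) • Φ w) :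
    Function.Surjective (phizQuotToFzQuot (A := A) hΦeq) := by
  rintro ⟨y, hy⟩
  induction y using Quot.ind with | mk p => ?_
  obtain ⟨g, a, w⟩ := p
  obtain ⟨ha, hw⟩ := (Ftil_eq_zero_iff hcompl hΦB _).mp ((quot_mk_mem_FZero_iff hΦeq).mp hy)
  obtain rfl : a = 0 := Subtype.ext ha
  exact ⟨Quot.mk _ ⟨w, hw⟩, Quot.sound ⟨g, _, rfl, by rw [mul_one]⟩⟩

def assocYToOrbits : AssocY G H E A W → orbitRel.Quotient (↥H) W :=
  Quot.lift (fun p => Quotient.mk _ p.2.2) <| by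
    rintro p q ⟨h, -, -, hw⟩
    exact Quotient.sound ⟨h⁻¹, by simp [hw]⟩

def fzQuotToOrbits : Quot (fzRel G H E A W Φ) → orbitRel.Quotient (↥H) W :=
  Quot.lift (fun y => assocYToOrbits y.1) <| by
    rintro y y' ⟨g, p, hy, hy'⟩
    rw [hy, hy']
    rfl

theorem fzQuotToOrbits_comp_phizQuotToFzQuot
    (hΦeq : ∀ (h : ↥H) (w : W), Φ (h • w) = (h : G) • Φ w) :
    fzQuotToOrbits ∘ phizQuotToFzQuot (A := A) hΦeq = phizQuotToOrbits := by
  ext ⟨w⟩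
  rfl

end Algebra

section Topology

variable {G : Type} [Group G] {H : Subgroup G} {E : Type} [NormedAddCommGroup E]
  [DistribMulAction G E] {W : Type} [TopologicalSpace W] [MulAction ↥H W] {Φ : W → E}

theorem isEmbedding_phizQuotToOrbits [ContinuousConstSMul (↥H) W]
    (hΦeq : ∀ (h : ↥H) (w : W), Φ (h • w) = (h : G) • Φ w) :
    IsEmbedding (phizQuotToOrbits (G := G) (H := H) (Φ := Φ)) := by
  refine isEmbedding_of_isOpenQuotientMap_of_isInducing Subtype.val _ (Quot.mk _) _ rfl
    IsInducing.subtypeVal isQuotientMap_quot_mk isOpenQuotientMap_quotientMk ?_ ?_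
  · rintro ⟨w⟩ ⟨w'⟩ hww'
    obtain ⟨h, hw⟩ := Quotient.exact hww'.symm
    exact Quot.sound ⟨h, hw⟩
  · rintro w ⟨_, ⟨w', rfl⟩, hww'⟩
    obtain ⟨h, rfl⟩ := Quotient.exact hww'.symm
    exact ⟨⟨h • w', smul_mem_PhiZero hΦeq h w'.2⟩, rfl⟩

variable [TopologicalSpace G] [NormedSpace ℝ E] {A : Submodule ℝ E}

theorem continuous_assocYToOrbits :
    Continuous (assocYToOrbits (G := G) (H := H) (E := E) (A := A) (W := W)) :=
  continuous_quot_lift _ <| continuous_quot_mk.comp <| continuous_snd.comp continuous_snd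

theorem continuous_fzQuotToOrbits :
    Continuous (fzQuotToOrbits (G := G) (H := H) (A := A) (Φ := Φ)) :=
  continuous_quot_lift _ <| continuous_assocYToOrbits.comp continuous_subtype_val

theorem continuous_phizQuotToFzQuot (hΦeq : ∀ (h : ↥H) (w : W), Φ (h • w) = (h : G) • Φ w) :
    Continuous (phizQuotToFzQuot (A := A) hΦeq) :=
  continuous_quot_lift _ <| continuous_quot_mk.comp <| Continuous.subtype_mk
    (continuous_quot_mk.comp <| continuous_const.prodMk <|
      continuous_const.prodMk continuous_subtype_val) _

theorem isHomeomorph_phizQuotToFzQuot [ContinuousConstSMul (↥H) W] {B : Submodule ℝ E}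
    (hcompl : IsCompl A B) (hΦB : ∀ w : W, Φ w ∈ B)
    (hΦeq : ∀ (h : ↥H) (w : W), Φ (h • w) = (h : G) • Φ w) :
    IsHomeomorph (phizQuotToFzQuot (A := A) hΦeq) := by
  refine isHomeomorph_iff_isEmbedding_surjective.mpr
    ⟨.of_comp (continuous_phizQuotToFzQuot hΦeq) continuous_fzQuotToOrbits ?_,
      phizQuotToFzQuot_surjective hcompl hΦB hΦeq⟩
  rw [fzQuotToOrbits_comp_phizQuotToFzQuot]
  exact isEmbedding_phizQuotToOrbits hΦeq

end Topology

theorem associated_bundle_zero_fiber_quotient_general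
    (G : Type) [Group G] [TopologicalSpace G]
    (H : Subgroup G)
    (E : Type) [NormedAddCommGroup E] [NormedSpace ℝ E]
    [DistribMulAction G E]
    (A B : Submodule ℝ E)
    (hcompl : IsCompl A B)
    (W : Type) [TopologicalSpace W] [MulAction ↥H W] [ContinuousSMul ↥H W]
    (Φ : W → E) (hΦB : ∀ w : W, Φ w ∈ B)
    (hΦeq : ∀ (h : ↥H) (w : W), Φ (h • w) = (h : G) • Φ w) :
    -- `F` is well defined on `Y = (G × (A × W))/H`
    (∀ p q : G × (↥A × W), assocRel G H E A W p q → Ftil G E A W Φ p = Ftil G E A W Φ q) ∧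
    -- `F` is `G`-equivariant
    (∀ (g : G) (p : G × (↥A × W)), Ftil G E A W Φ (g * p.1, p.2) = g • Ftil G E A W Φ p) ∧
    -- `F⁻¹(0) = {[g, 0, w] : Φ(w) = 0}`
    (∀ p : G × (↥A × W), Ftil G E A W Φ p = 0 ↔ ((p.2.1 : E) = 0 ∧ Φ p.2.2 = 0)) ∧
    -- `w ↦ [1, 0, w]` induces a homeomorphism `Φ⁻¹(0)/H ≃ₜ F⁻¹(0)/G`
    (∃ φ : Quot (phizRel G H E W Φ) ≃ₜ Quot (fzRel G H E A W Φ),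
      ∀ (w : ↥(PhiZero E W Φ)) (y : ↥(FZero G H E A W Φ)),
        y.1 = Quot.mk (assocRel G H E A W) (1, ((0 : ↥A), w.1)) →
          φ (Quot.mk _ w) = Quot.mk _ y) ∧
    -- the `G`-stabilizer of `[1, 0, w]` equals the `H`-stabilizer of `w`
    (∀ w : W, Φ w = 0 → ∀ g : G,
      Quot.mk (assocRel G H E A W) (g, ((0 : ↥A), w)) =
        Quot.mk (assocRel G H E A W) (1, ((0 : ↥A), w)) ↔
      ∃ h : ↥H, (h : G) = g ∧ h • w = w) := by
  refine ⟨fun _ _ => Ftil_eq_of_assocRel hΦeq, Ftil_mul_left, Ftil_eq_zero_iff hcompl hΦB,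
    ⟨(isHomeomorph_phizQuotToFzQuot hcompl hΦB hΦeq).homeomorph, fun w y hy => ?_⟩,
    fun w _ => quot_mk_zero_eq_quot_mk_one_zero_iff w⟩
  exact congrArg (Quot.mk _) (Subtype.ext hy.symm)

/-- Let `G` be a topological group, `H` a compact subgroup, `E` a
finite-dimensional real vector space with a continuous linear `G`-action and an
`H`-invariant direct sum decomposition `E = A ⊕ B`, `W` a topological space with a
continuous `H`-action and `Φ : W → B` a continuous `H`-equivariant map.  Form
`Y = (G × (A × W))/H` and `F : Y → E`, `F([g, a, w]) = g • (a + Φ(w))`.  Then `F` is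
well defined and `G`-equivariant, `F⁻¹(0) = {[g, 0, w] : Φ(w) = 0}`, the map
`w ↦ [1, 0, w]` induces a homeomorphism `Φ⁻¹(0)/H → F⁻¹(0)/G`, and for every
`w ∈ Φ⁻¹(0)` the `G`-stabilizer of `[1, 0, w]` equals the `H`-stabilizer of `w` (so the
homeomorphism matches orbit-type pieces). -/
theorem associated_bundle_zero_fiber_quotient
    (G : Type) [Group G] [TopologicalSpace G] [IsTopologicalGroup G]
    (H : Subgroup G) (hHc : IsCompact (H : Set G))
    (E : Type) [NormedAddCommGroup E] [NormedSpace ℝ E] [FiniteDimensional ℝ E]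
    [DistribMulAction G E] [SMulCommClass G ℝ E] [ContinuousSMul G E]
    (A B : Submodule ℝ E)
    (hAinv : ∀ h ∈ H, ∀ a ∈ A, h • a ∈ A)
    (hBinv : ∀ h ∈ H, ∀ b ∈ B, h • b ∈ B)
    (hcompl : IsCompl A B)
    (W : Type) [TopologicalSpace W] [MulAction ↥H W] [ContinuousSMul ↥H W]
    (Φ : W → E) (hΦcont : Continuous Φ) (hΦB : ∀ w : W, Φ w ∈ B)
    (hΦeq : ∀ (h : ↥H) (w : W), Φ (h • w) = (h : G) • Φ w) :
    -- `F` is well defined on `Y = (G × (A × W))/H`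
    (∀ p q : G × (↥A × W), assocRel G H E A W p q → Ftil G E A W Φ p = Ftil G E A W Φ q) ∧
    -- `F` is `G`-equivariant
    (∀ (g : G) (p : G × (↥A × W)), Ftil G E A W Φ (g * p.1, p.2) = g • Ftil G E A W Φ p) ∧
    -- `F⁻¹(0) = {[g, 0, w] : Φ(w) = 0}`
    (∀ p : G × (↥A × W), Ftil G E A W Φ p = 0 ↔ ((p.2.1 : E) = 0 ∧ Φ p.2.2 = 0)) ∧
    -- `w ↦ [1, 0, w]` induces a homeomorphism `Φ⁻¹(0)/H ≃ₜ F⁻¹(0)/G`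
    (∃ φ : Quot (phizRel G H E W Φ) ≃ₜ Quot (fzRel G H E A W Φ),
      ∀ (w : ↥(PhiZero E W Φ)) (y : ↥(FZero G H E A W Φ)),
        y.1 = Quot.mk (assocRel G H E A W) (1, ((0 : ↥A), w.1)) →
          φ (Quot.mk _ w) = Quot.mk _ y) ∧
    -- the `G`-stabilizer of `[1, 0, w]` equals the `H`-stabilizer of `w`
    (∀ w : W, Φ w = 0 → ∀ g : G,
      Quot.mk (assocRel G H E A W) (g, ((0 : ↥A), w)) =
        Quot.mk (assocRel G H E A W) (1, ((0 : ↥A), w)) ↔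
      ∃ h : ↥H, (h : G) = g ∧ h • w = w) :=
  associated_bundle_zero_fiber_quotient_general G H E A B hcompl W Φ hΦB hΦeq
end

section
/- Let V be a finite-dimensional real vector space, ω a symplectic form on V, H a compact subgroup of GL(V) preserving ω, with Lie algebra 𝔥 := {X ∈ End(V) : exp(tX) ∈ H for all t ∈ ℝ} and moment map zero level set Z := {v ∈ V : ω(Xv, v) = 0 for all X ∈ 𝔥}. Let U := V^H and let W be the ω-orthogonal complement of U. Then for all u ∈ U and w ∈ W, one has u + w ∈ Z if and only if w ∈ Z; equivalently, Z = U ⊕ (Z ∩ W) = {u + w : u ∈ U, w ∈ Z ∩ W}. -/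
/-! Every `X ∈ 𝔥` kills `U = V^H`, and differentiating the invariance `ω (h x) u = ω x u`
(`h ∈ H`, `u ∈ U`) along `t ↦ exp (t X)` shows that `X` maps all of `V` into `W`. Hence
`ω (X (u + w)) (u + w) = ω (X w) w` for `u ∈ U`, i.e. `Z` is invariant under translation by `U`.
Averaging `h v` over the Haar probability measure of the compact group `H` gives `u ∈ U` with
`v - u ∈ W`, so every `v ∈ Z` splits as `u + (v - u)` with `v - u ∈ Z ∩ W`. -/

section SymplecticSetup

variable (V : Type) [NormedAddCommGroup V] [NormedSpace ℝ V]

/-- The action of an element of a subgroup `H` of `GL(V) = (V →L[ℝ] V)ˣ` on `V`. -/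
def glApp (H : Subgroup (V →L[ℝ] V)ˣ) (h : ↥H) (v : V) : V :=
  ((h : (V →L[ℝ] V)ˣ) : V →L[ℝ] V) v

/-- The exponential of a linear operator, as a power series. -/
noncomputable def opExp (X : V →L[ℝ] V) : V →L[ℝ] V :=
  ∑' k : ℕ, ((k.factorial : ℝ)⁻¹) • X ^ k

/-- The Lie algebra `𝔥` of a subgroup `H ≤ GL(V)`: operators whose one-parameter
flows stay in `H`. -/
def glLieAlg (H : Subgroup (V →L[ℝ] V)ˣ) : Set (V →L[ℝ] V) :=
  {X | ∀ t : ℝ, ∃ u ∈ H, ((u : (V →L[ℝ] V)ˣ) : V →L[ℝ] V) = opExp V (t • X)}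

/-- The zero level set `Z` of the moment map `⟨Φ(v), X⟩ = (1/2) ω(Xv, v)` of the linear
`H`-action on `(V, ω)`. -/
def momentZeroV (ω : V →ₗ[ℝ] V →ₗ[ℝ] ℝ) (H : Subgroup (V →L[ℝ] V)ˣ) : Set V :=
  {v | ∀ X ∈ glLieAlg V H, ω (X v) v = 0}

/-- The set `U = V^H` of `H`-fixed vectors. -/
def fixedSet (H : Subgroup (V →L[ℝ] V)ˣ) : Set V :=
  {v | ∀ h ∈ H, ((h : (V →L[ℝ] V)ˣ) : V →L[ℝ] V) v = v}

/-- The `ω`-orthogonal complement `W` of the fixed subspace `U = V^H`. -/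
def omegaPerp (ω : V →ₗ[ℝ] V →ₗ[ℝ] ℝ) (H : Subgroup (V →L[ℝ] V)ˣ) : Set V :=
  {w | ∀ u ∈ fixedSet V H, ω w u = 0}

/-- The set `V_{(L)}` of points of `V` whose `H`-stabilizer is conjugate to `L` in `H`. -/
def glOrbitType (H : Subgroup (V →L[ℝ] V)ˣ) (L : Subgroup ↥H) : Set V :=
  {v | ∃ g : ↥H, ∀ k : ↥H, glApp V H k v = v ↔ g⁻¹ * k * g ∈ L}

/-- Two points of an `H`-invariant subset `A ⊆ V` are related iff they lie on the same
`H`-orbit. -/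
def glRel (H : Subgroup (V →L[ℝ] V)ˣ) (A : Set V) (a b : ↥A) : Prop :=
  ∃ h : ↥H, glApp V H h a.1 = b.1

/-- The quotient `A/H` of a subset `A ⊆ V` by the `H`-action, with the quotient
topology. -/
def GQ (H : Subgroup (V →L[ℝ] V)ˣ) (A : Set V) : Type := Quot (glRel V H A)

instance (H : Subgroup (V →L[ℝ] V)ˣ) (A : Set V) : TopologicalSpace (GQ V H A) :=
  inferInstanceAs (TopologicalSpace (Quot _))

/-- The subset `(A ∩ V_{(L)})/H` of the quotient `A/H`. -/
def gqPiece (H : Subgroup (V →L[ℝ] V)ˣ) (A : Set V) (L : Subgroup ↥H) :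
    Set (GQ V H A) :=
  Quot.mk (glRel V H A) '' {a : ↥A | a.1 ∈ glOrbitType V H L}

/-- The canonical partition of the quotient `A/H`: the connected components of the sets
`(A ∩ V_{(L)})/H`. -/
def gqCanonPieces (H : Subgroup (V →L[ℝ] V)ˣ) (A : Set V) : Set (Set (GQ V H A)) :=
  {T | ∃ (L : Subgroup ↥H) (x : GQ V H A), x ∈ gqPiece V H A L ∧
        T = connectedComponentIn (gqPiece V H A L) x}

end SymplecticSetup

open MeasureTheory

section LieAlgebra

variable {V : Type} [NormedAddCommGroup V] [NormedSpace ℝ V]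

theorem opExp_eq_exp (X : V →L[ℝ] V) : opExp V X = NormedSpace.exp X := by
  rw [NormedSpace.exp_eq_tsum ℝ]
  rfl

theorem hasDerivAt_opExp_smul_apply [CompleteSpace V] (X : V →L[ℝ] V) (v : V) :
    HasDerivAt (fun t : ℝ => opExp V (t • X) v) (X v) 0 := by
  have hexp := (hasDerivAt_exp_smul_const (𝕂 := ℝ) X 0).clm_apply (hasDerivAt_const 0 v)
  simpa only [opExp_eq_exp, zero_smul, NormedSpace.exp_zero, one_mul, map_zero, add_zero]
    using hexp

theorem map_apply_eq_zero_of_mem_glLieAlg [CompleteSpace V] {F : Type*} [NormedAddCommGroup F]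
    [NormedSpace ℝ F] {H : Subgroup (V →L[ℝ] V)ˣ} {X : V →L[ℝ] V} (hX : X ∈ glLieAlg V H)
    (φ : V →L[ℝ] F) {v : V}
    (hφ : ∀ h ∈ H, φ (((h : (V →L[ℝ] V)ˣ) : V →L[ℝ] V) v) = φ v) :
    φ (X v) = 0 := by
  have hconst : (fun t : ℝ => φ (opExp V (t • X) v)) = fun _ => φ v := by
    funext t
    obtain ⟨h, hH, hexp⟩ := hX t
    rw [← hexp, hφ h hH]
  have hderiv := φ.hasFDerivAt.comp_hasDerivAt 0 (hasDerivAt_opExp_smul_apply X v)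
  rw [Function.comp_def, hconst] at hderiv
  exact hderiv.unique (hasDerivAt_const 0 (φ v))

theorem glLieAlg_apply_eq_zero_of_mem_fixedSet [CompleteSpace V] {H : Subgroup (V →L[ℝ] V)ˣ}
    {X : V →L[ℝ] V} (hX : X ∈ glLieAlg V H) {u : V} (hu : u ∈ fixedSet V H) : X u = 0 :=
  map_apply_eq_zero_of_mem_glLieAlg hX (ContinuousLinearMap.id ℝ V) fun h hH => hu h hH

theorem omega_apply_left_eq_of_mem_fixedSet (ω : V →ₗ[ℝ] V →ₗ[ℝ] ℝ)
    {H : Subgroup (V →L[ℝ] V)ˣ}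
    (hHω : ∀ h ∈ H, ∀ u v : V,
      ω (((h : (V →L[ℝ] V)ˣ) : V →L[ℝ] V) u) (((h : (V →L[ℝ] V)ˣ) : V →L[ℝ] V) v) = ω u v)
    {h : (V →L[ℝ] V)ˣ} (hH : h ∈ H) {u : V} (hu : u ∈ fixedSet V H) (v : V) :
    ω ((h : V →L[ℝ] V) v) u = ω v u := by
  conv_lhs => rw [← hu h hH]
  exact hHω h hH v u

theorem glLieAlg_apply_mem_omegaPerp [FiniteDimensional ℝ V] (ω : V →ₗ[ℝ] V →ₗ[ℝ] ℝ)
    {H : Subgroup (V →L[ℝ] V)ˣ}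
    (hHω : ∀ h ∈ H, ∀ u v : V,
      ω (((h : (V →L[ℝ] V)ˣ) : V →L[ℝ] V) u) (((h : (V →L[ℝ] V)ˣ) : V →L[ℝ] V) v) = ω u v)
    {X : V →L[ℝ] V} (hX : X ∈ glLieAlg V H) (w : V) : X w ∈ omegaPerp V ω H := by
  intro u hu
  exact map_apply_eq_zero_of_mem_glLieAlg hX (LinearMap.toContinuousLinearMap (ω.flip u))
    fun h hH => omega_apply_left_eq_of_mem_fixedSet ω hHω hH hu w

theorem moment_add_of_mem_fixedSet [FiniteDimensional ℝ V] (ω : V →ₗ[ℝ] V →ₗ[ℝ] ℝ)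
    {H : Subgroup (V →L[ℝ] V)ˣ}
    (hHω : ∀ h ∈ H, ∀ u v : V,
      ω (((h : (V →L[ℝ] V)ˣ) : V →L[ℝ] V) u) (((h : (V →L[ℝ] V)ˣ) : V →L[ℝ] V) v) = ω u v)
    {X : V →L[ℝ] V} (hX : X ∈ glLieAlg V H) {u : V} (hu : u ∈ fixedSet V H) (w : V) :
    ω (X (u + w)) (u + w) = ω (X w) w := by
  rw [map_add X, glLieAlg_apply_eq_zero_of_mem_fixedSet hX hu, zero_add, map_add,
    glLieAlg_apply_mem_omegaPerp ω hHω hX w u hu, zero_add]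

theorem add_mem_momentZeroV_iff [FiniteDimensional ℝ V] (ω : V →ₗ[ℝ] V →ₗ[ℝ] ℝ)
    {H : Subgroup (V →L[ℝ] V)ˣ}
    (hHω : ∀ h ∈ H, ∀ u v : V,
      ω (((h : (V →L[ℝ] V)ˣ) : V →L[ℝ] V) u) (((h : (V →L[ℝ] V)ˣ) : V →L[ℝ] V) v) = ω u v)
    {u : V} (hu : u ∈ fixedSet V H) (w : V) :
    u + w ∈ momentZeroV V ω H ↔ w ∈ momentZeroV V ω H :=
  forall₂_congr fun _ hX => by rw [moment_add_of_mem_fixedSet ω hHω hX hu w]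

end LieAlgebra

section Averaging

variable {V : Type} [NormedAddCommGroup V] [NormedSpace ℝ V]
  {H : Subgroup (V →L[ℝ] V)ˣ} [MeasurableSpace H] [BorelSpace H] (μ : Measure H)

theorem integral_apply_mem_fixedSet [μ.IsMulLeftInvariant] (v : V) :
    ∫ h, ((h : (V →L[ℝ] V)ˣ) : V →L[ℝ] V) v ∂μ ∈ fixedSet V H := by
  intro g hg
  have hshift : ∀ h : H, (g : V →L[ℝ] V) (((h : (V →L[ℝ] V)ˣ) : V →L[ℝ] V) v) =
      ((((⟨g, hg⟩ * h : H) : (V →L[ℝ] V)ˣ) : V →L[ℝ] V) v) := fun _ => rfl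
  calc (g : V →L[ℝ] V) (∫ h, ((h : (V →L[ℝ] V)ˣ) : V →L[ℝ] V) v ∂μ)
      = ∫ h, (g : V →L[ℝ] V) (((h : (V →L[ℝ] V)ˣ) : V →L[ℝ] V) v) ∂μ :=
        ((ContinuousLinearEquiv.unitsEquiv ℝ V g).integral_comp_comm _).symm
    _ = ∫ h, ((h : (V →L[ℝ] V)ˣ) : V →L[ℝ] V) v ∂μ := by
        simp_rw [hshift]
        exact integral_mul_left_eq_self (fun h : H => ((h : (V →L[ℝ] V)ˣ) : V →L[ℝ] V) v) _

theorem map_integral_apply_eq [CompleteSpace V] [CompactSpace H] [IsProbabilityMeasure μ]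
    {F : Type*} [NormedAddCommGroup F] [NormedSpace ℝ F] [CompleteSpace F] (φ : V →L[ℝ] F)
    {v : V}
    (hφ : ∀ h ∈ H, φ (((h : (V →L[ℝ] V)ˣ) : V →L[ℝ] V) v) = φ v) :
    φ (∫ h, ((h : (V →L[ℝ] V)ˣ) : V →L[ℝ] V) v ∂μ) = φ v := by
  have hcont : Continuous fun h : H => ((h : (V →L[ℝ] V)ˣ) : V →L[ℝ] V) v :=
    (Units.continuous_val.comp continuous_subtype_val).clm_apply continuous_const
  rw [← φ.integral_comp_comm (hcont.integrable_of_hasCompactSupport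
    (HasCompactSupport.of_compactSpace _))]
  simp [fun h : H => hφ h h.2]

end Averaging

theorem exists_isProbabilityMeasure_isMulLeftInvariant {G : Type*} [Group G]
    [TopologicalSpace G] [IsTopologicalGroup G] [CompactSpace G] [MeasurableSpace G]
    [BorelSpace G] : ∃ μ : Measure G, IsProbabilityMeasure μ ∧ μ.IsMulLeftInvariant := by
  refine ⟨Measure.haarMeasure ⊤, ⟨?_⟩, inferInstance⟩
  rw [← TopologicalSpace.PositiveCompacts.coe_top (α := G)]
  exact Measure.haarMeasure_self

theorem exists_mem_fixedSet_sub_mem_omegaPerp {V : Type} [NormedAddCommGroup V]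
    [NormedSpace ℝ V] [FiniteDimensional ℝ V] (ω : V →ₗ[ℝ] V →ₗ[ℝ] ℝ)
    {H : Subgroup (V →L[ℝ] V)ˣ} (hHc : IsCompact (H : Set (V →L[ℝ] V)ˣ))
    (hHω : ∀ h ∈ H, ∀ u v : V,
      ω (((h : (V →L[ℝ] V)ˣ) : V →L[ℝ] V) u) (((h : (V →L[ℝ] V)ˣ) : V →L[ℝ] V) v) = ω u v)
    (v : V) : ∃ u ∈ fixedSet V H, v - u ∈ omegaPerp V ω H := by
  have : CompactSpace H := isCompact_iff_compactSpace.mp hHc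
  let : MeasurableSpace H := borel H
  have : BorelSpace H := ⟨rfl⟩
  obtain ⟨μ, _, _⟩ := exists_isProbabilityMeasure_isMulLeftInvariant (G := H)
  refine ⟨_, integral_apply_mem_fixedSet μ v, fun u hu => ?_⟩
  rw [map_sub, LinearMap.sub_apply, sub_eq_zero]
  exact (map_integral_apply_eq μ (LinearMap.toContinuousLinearMap (ω.flip u))
    fun h hH => omega_apply_left_eq_of_mem_fixedSet ω hHω hH hu v).symm

theorem moment_zero_set_splits_off_fixed_subspace_general
    (V : Type) [NormedAddCommGroup V] [NormedSpace ℝ V] [FiniteDimensional ℝ V]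
    (ω : V →ₗ[ℝ] V →ₗ[ℝ] ℝ)
    (H : Subgroup (V →L[ℝ] V)ˣ)
    (hHc : IsCompact (H : Set (V →L[ℝ] V)ˣ))
    (hHω : ∀ h ∈ H, ∀ u v : V,
      ω (((h : (V →L[ℝ] V)ˣ) : V →L[ℝ] V) u) (((h : (V →L[ℝ] V)ˣ) : V →L[ℝ] V) v)
        = ω u v) :
    (∀ u ∈ fixedSet V H, ∀ w ∈ omegaPerp V ω H,
      (u + w ∈ momentZeroV V ω H ↔ w ∈ momentZeroV V ω H)) ∧
    momentZeroV V ω H =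
      {v : V | ∃ u ∈ fixedSet V H, ∃ w ∈ momentZeroV V ω H ∩ omegaPerp V ω H,
        v = u + w} := by
  refine ⟨fun u hu w _ => add_mem_momentZeroV_iff ω hHω hu w, ?_⟩
  ext v
  constructor
  · intro hv
    obtain ⟨u, hu, hvu⟩ := exists_mem_fixedSet_sub_mem_omegaPerp ω hHc hHω v
    refine ⟨u, hu, v - u, ⟨?_, hvu⟩, (add_sub_cancel u v).symm⟩
    rwa [← add_mem_momentZeroV_iff ω hHω hu, add_sub_cancel]
  · rintro ⟨u, hu, w, ⟨hw, -⟩, rfl⟩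
    exact (add_mem_momentZeroV_iff ω hHω hu w).mpr hw

/-- With `Z` the zero level set of the moment map, `U = V^H` and `W`
the `ω`-orthogonal complement of `U`: for all `u ∈ U` and `w ∈ W` one has
`u + w ∈ Z ↔ w ∈ Z`; equivalently `Z = U ⊕ (Z ∩ W)`. -/
theorem moment_zero_set_splits_off_fixed_subspace
    (V : Type) [NormedAddCommGroup V] [NormedSpace ℝ V] [FiniteDimensional ℝ V]
    (ω : V →ₗ[ℝ] V →ₗ[ℝ] ℝ)
    (halt : ∀ v : V, ω v v = 0)
    (hnd : ∀ v : V, (∀ w : V, ω v w = 0) → v = 0)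
    (H : Subgroup (V →L[ℝ] V)ˣ)
    (hHc : IsCompact (H : Set (V →L[ℝ] V)ˣ))
    (hHω : ∀ h ∈ H, ∀ u v : V,
      ω (((h : (V →L[ℝ] V)ˣ) : V →L[ℝ] V) u) (((h : (V →L[ℝ] V)ˣ) : V →L[ℝ] V) v)
        = ω u v) :
    (∀ u ∈ fixedSet V H, ∀ w ∈ omegaPerp V ω H,
      (u + w ∈ momentZeroV V ω H ↔ w ∈ momentZeroV V ω H)) ∧
    momentZeroV V ω H =
      {v : V | ∃ u ∈ fixedSet V H, ∃ w ∈ momentZeroV V ω H ∩ omegaPerp V ω H,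
        v = u + w} :=
  moment_zero_set_splits_off_fixed_subspace_general V ω H hHc hHω
end
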